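/- There exist two probability distributions p and q on bit strings of length n = 2^k (for suitable k, e.g. k ≥ 2) whose first and second moments (hence covariance matrices, with bits viewed as ±1-valued random vectors) coincide, yet whose total variation distance equals 1 − n·2^{1−n}. In particular, the total variation distance between two distributions on bit strings cannot be upper bounded by any function of the difference of their covariance matrices. -/

import Mathlib

/-!
Read bits as elements of `𝔽₂` (`Bool` is a Boolean ring, `+` being `xor`). Then `q` is uniform on
the whole space and `p` is uniform on the Hadamard code, the image of the injective additive map
`(a, c) ↦ (j ↦ c + ⟨a, v_j⟩)` where `v_j` runs over `𝔽₂^k`. For a uniform distribution on the image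
of an additive map `X`, translating by `g` flips the spin of coordinate `i` iff `X g i = 1`. So the
first moment at `i` vanishes once some `X g i = 1`, and the second moment at `i ≠ j` vanishes once
some `X g i ≠ X g j`. Both codes have such `g`, so all first moments and off-diagonal second moments
vanish under `p` and `q`, and the diagonal ones are `1`. As `p` is uniform on `2n` of the
`2^n` words, its total variation distance to `q` is `1 - 2n / 2^n`.
-/

open Finset

def spin (b : Bool) : ℝ := if b then 1 else -1

lemma spin_add_true (b : Bool) : spin (b + true) = -spin b := by
  cases b <;> simp [spin, Bool.add_eq_xor]

lemma spin_add_mul_spin_add_of_ne {b b' d d' : Bool} (h : d ≠ d') :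
    spin (b + d) * spin (b' + d') = -(spin b * spin b') := by
  cases b <;> cases b' <;> cases d <;> cases d' <;> simp_all [spin, Bool.add_eq_xor]

lemma spin_mul_self (b : Bool) : spin b * spin b = 1 := by
  cases b <;> simp [spin]

lemma Fintype.sum_eq_zero_of_add_right_eq_neg {G M : Type*} [AddGroup G] [Fintype G]
    [AddCommGroup M] [IsAddTorsionFree M] (f : G → M) (g : G) (h : ∀ x, f (x + g) = -f x) :
    ∑ x, f x = 0 := by
  rw [← self_eq_neg]
  calc ∑ x, f x = ∑ x, f (x + g) := (Equiv.sum_comp (Equiv.addRight g) f).symm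
    _ = -∑ x, f x := by simp only [h, sum_neg_distrib]

section Balanced

variable {G ι : Type*} [AddGroup G] [Fintype G]

lemma sum_spin_eq_zero (X : G →+ ι → Bool) {i : ι} {g : G} (hg : X g i = true) :
    ∑ x, spin (X x i) = 0 :=
  Fintype.sum_eq_zero_of_add_right_eq_neg _ g fun x => by
    rw [map_add, Pi.add_apply, hg, spin_add_true]

lemma sum_spin_mul_spin_eq_zero (X : G →+ ι → Bool) {i j : ι} {g : G} (hg : X g i ≠ X g j) :
    ∑ x, spin (X x i) * spin (X x j) = 0 :=
  Fintype.sum_eq_zero_of_add_right_eq_neg _ g fun x => by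
    simp only [map_add, Pi.add_apply]
    exact spin_add_mul_spin_add_of_ne hg

end Balanced

section Uniform

variable {α : Type*}

lemma half_sum_abs_sub_eq_one_sub_sum_min [Fintype α] {p q : α → ℝ} (hp : ∑ x, p x = 1)
    (hq : ∑ x, q x = 1) :
    (1 / 2 : ℝ) * ∑ x, |p x - q x| = 1 - ∑ x, min (p x) (q x) := by
  have h : ∀ x, |p x - q x| = p x + q x - 2 * min (p x) (q x) := fun x => by
    rw [abs_sub_comm, ← max_sub_min_eq_abs, ← min_add_max (p x) (q x)]
    ring
  simp only [h, sum_sub_distrib, sum_add_distrib, ← mul_sum, hp, hq]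
  ring

variable [DecidableEq α]

noncomputable def uniformDensity (s : Finset α) (x : α) : ℝ :=
  if x ∈ s then (#s : ℝ)⁻¹ else 0

lemma uniformDensity_nonneg (s : Finset α) (x : α) : 0 ≤ uniformDensity s x := by
  unfold uniformDensity
  split <;> positivity

variable [Fintype α]

lemma sum_uniformDensity_mul (s : Finset α) (f : α → ℝ) :
    ∑ x, uniformDensity s x * f x = (#s : ℝ)⁻¹ * ∑ x ∈ s, f x := by
  simp only [uniformDensity, ite_mul, zero_mul, sum_ite_mem, univ_inter, mul_sum]

lemma sum_uniformDensity {s : Finset α} (hs : s.Nonempty) : ∑ x, uniformDensity s x = 1 := by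
  simpa [hs.ne_empty] using sum_uniformDensity_mul s 1

lemma sum_min_uniformDensity_of_subset {s t : Finset α} (hst : s ⊆ t) (hs : s.Nonempty) :
    ∑ x, min (uniformDensity s x) (uniformDensity t x) = #s / #t := by
  have h : ∀ x, min (uniformDensity s x) (uniformDensity t x) =
      if x ∈ s then (#t : ℝ)⁻¹ else 0 := fun x => by
    by_cases hx : x ∈ s
    · have hst' : (#t : ℝ)⁻¹ ≤ (#s : ℝ)⁻¹ :=
        inv_anti₀ (by simpa using hs.card_pos) (by exact_mod_cast card_le_card hst)
      simp [uniformDensity, hx, hst hx, hst']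
    · have hs0 : uniformDensity s x = 0 := if_neg hx
      rw [hs0, min_eq_left (uniformDensity_nonneg t x), if_neg hx]
  simp only [h, sum_ite_mem, univ_inter, sum_const, nsmul_eq_mul, div_eq_mul_inv]

lemma half_sum_abs_uniformDensity_sub_of_subset {s t : Finset α} (hst : s ⊆ t)
    (hs : s.Nonempty) :
    (1 / 2 : ℝ) * ∑ x, |uniformDensity s x - uniformDensity t x| = 1 - #s / #t := by
  rw [half_sum_abs_sub_eq_one_sub_sum_min (sum_uniformDensity hs)
    (sum_uniformDensity (hs.mono hst)), sum_min_uniformDensity_of_subset hst hs]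

variable {G : Type*} [AddGroup G] [Fintype G] {ι : Type*} [Fintype ι] [DecidableEq ι]

lemma sum_uniformDensity_image_mul_spin_eq_zero {X : G →+ ι → Bool}
    (hX : Function.Injective X) {i : ι} (h : ∃ g, X g i = true) :
    ∑ x : ι → Bool, uniformDensity (univ.image X) x * spin (x i) = 0 := by
  obtain ⟨g, hg⟩ := h
  rw [sum_uniformDensity_mul, sum_image hX.injOn, sum_spin_eq_zero X hg, mul_zero]

lemma sum_uniformDensity_image_mul_spin_mul_spin_eq_zero {X : G →+ ι → Bool}
    (hX : Function.Injective X) {i j : ι} (h : ∃ g, X g i ≠ X g j) :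
    ∑ x : ι → Bool, uniformDensity (univ.image X) x * (spin (x i) * spin (x j)) = 0 := by
  obtain ⟨g, hg⟩ := h
  rw [sum_uniformDensity_mul, sum_image hX.injOn, sum_spin_mul_spin_eq_zero X hg, mul_zero]

end Uniform

section Hadamard

variable {σ ι : Type*} [Fintype σ]

/-- Row `a` of the Sylvester–Hadamard matrix `((-1) ^ ⟨a, v⟩)`, with columns labelled through `e`
and complemented when `c = 1`. -/
def hadamardEncode (e : ι ≃ (σ → Bool)) : (σ → Bool) × Bool →+ ι → Bool :=
  AddMonoidHom.mk' (fun ac j => ac.2 + ac.1 ⬝ᵥ e j) fun _ _ => by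
    funext j
    simp only [Prod.fst_add, Prod.snd_add, add_dotProduct, Pi.add_apply]
    abel

@[simp]
lemma hadamardEncode_apply (e : ι ≃ (σ → Bool)) (ac : (σ → Bool) × Bool) (j : ι) :
    hadamardEncode e ac j = ac.2 + ac.1 ⬝ᵥ e j :=
  rfl

lemma hadamardEncode_injective [DecidableEq σ] (e : ι ≃ (σ → Bool)) :
    Function.Injective (hadamardEncode e) := by
  rw [injective_iff_map_eq_zero]
  rintro ⟨a, c⟩ h
  have hc : c = 0 := by simpa using congrFun h (e.symm 0)
  subst hc
  have ha : ∀ t, a t = 0 := fun t => by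
    simpa [Bool.mul_eq_and] using congrFun h (e.symm (Pi.single t true))
  ext t <;> simp [ha]

lemma exists_hadamardEncode_apply_eq_true (e : ι ≃ (σ → Bool)) (i : ι) :
    ∃ g, hadamardEncode e g i = true :=
  ⟨(0, true), by simp⟩

lemma exists_hadamardEncode_apply_ne [DecidableEq σ] (e : ι ≃ (σ → Bool)) {i j : ι}
    (hij : i ≠ j) :
    ∃ g, hadamardEncode e g i ≠ hadamardEncode e g j := by
  obtain ⟨t, ht⟩ := Function.ne_iff.mp (e.injective.ne hij)
  exact ⟨(Pi.single t true, false), by simpa [Bool.mul_eq_and] using ht⟩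

end Hadamard

/-- There exist two probability distributions on bit strings of length `n = 2^k`
(for any `k ≥ 2`) whose first and second `±1`-moments (hence covariance
matrices) coincide, yet whose total variation distance equals
`1 − n·2^{1−n}` (written here as `1 − 2n/2^n`). -/
theorem stmt4 :
    ∀ k : ℕ, 2 ≤ k →
    ∃ (p q : (Fin (2 ^ k) → Bool) → ℝ),
      (∀ x, 0 ≤ p x) ∧ (∀ x, 0 ≤ q x) ∧
      (∑ x, p x) = 1 ∧ (∑ x, q x) = 1 ∧
      -- first moments coincide
      (∀ i, (∑ x, p x * (if x i then (1 : ℝ) else -1)) =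
            (∑ x, q x * (if x i then (1 : ℝ) else -1))) ∧
      -- second moments coincide
      (∀ i j, (∑ x, p x * ((if x i then (1 : ℝ) else -1) * (if x j then (1 : ℝ) else -1))) =
              (∑ x, q x * ((if x i then (1 : ℝ) else -1) * (if x j then (1 : ℝ) else -1)))) ∧
      -- yet the total variation distance is 1 − n·2^{1−n}
      ((1 / 2 : ℝ) * ∑ x, |p x - q x|) =
        1 - ((2 ^ k : ℝ) * 2) / (2 : ℝ) ^ (2 ^ k) := by
  intro k _
  let e : Fin (2 ^ k) ≃ (Fin k → Bool) := (Fintype.equivFinOfCardEq (by simp)).symm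
  have hH := hadamardEncode_injective e
  have hid : Function.Injective (AddMonoidHom.id (Fin (2 ^ k) → Bool)) := fun _ _ h => h
  refine ⟨uniformDensity (univ.image (hadamardEncode e)),
    uniformDensity (univ.image (AddMonoidHom.id _)),
    uniformDensity_nonneg _, uniformDensity_nonneg _, sum_uniformDensity (univ_nonempty.image _),
    sum_uniformDensity (univ_nonempty.image _), fun i => ?_, fun i j => ?_, ?_⟩
  · exact (sum_uniformDensity_image_mul_spin_eq_zero hH
      (exists_hadamardEncode_apply_eq_true e i)).trans
      (sum_uniformDensity_image_mul_spin_eq_zero hid ⟨Pi.single i true, by simp⟩).symm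
  · obtain rfl | hij := eq_or_ne i j
    · simp only [← spin.eq_def, spin_mul_self, mul_one,
        sum_uniformDensity (univ_nonempty.image _)]
    · exact (sum_uniformDensity_image_mul_spin_mul_spin_eq_zero hH
        (exists_hadamardEncode_apply_ne e hij)).trans
        (sum_uniformDensity_image_mul_spin_mul_spin_eq_zero hid
          ⟨Pi.single i true, by simp [hij]⟩).symm
  · rw [half_sum_abs_uniformDensity_sub_of_subset (fun x _ => by simp) (univ_nonempty.image _),
      card_image_of_injective _ hH, card_image_of_injective _ hid]
    simp
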